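/- Under the assumptions: F is differentiable, L-smooth and μ-strongly convex; each G_j is convex and c-Lipschitz; H = F + G has the unique minimizer x*; and the stepsizes are α^{(k)} = 2μ/(μ²k + 12L²) with β^{(k)} = m·α^{(k)}. Then the BlockProx iterates satisfy, for every k ≥ 0: E‖x^{(k)} − x*‖² ≤ A/(μ²k + 12L²), where A = max{ 12L²·‖x^{(0)} − x*‖², (μ² + 12L²)·E‖x^{(1)} − x*‖², 4·(1 + 12L²/μ²)·7m²c² }. -/

import Mathlib

open Filter Set Finset Topology
open scoped RealInnerProductSpace NNReal BigOperators

/-!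
A BlockProx step takes block `i` of `prox_{β G_j}(z)` with its own uniform index `j = j_i`, so
the mean squared distance of the new iterate to `x*` equals the average over `j` of
`‖prox_{β G_j}(z) - x*‖²`. For each `j`, the three-point inequality of the prox, the bound
`‖z - prox_{β G_j}(z)‖ ≤ βc`, strong convexity of `F`, optimality of `x*` (which forces
`‖∇F(x*)‖ ≤ mc`) and `L`-smoothness give
`E‖x^{(t+1)} - x*‖² ≤ (1 - μα_t + 2L²α_t²) E‖x^{(t)} - x*‖² + 9m²c²α_t²`.
With `α_t = 2μ/(μ²t + 12L²)` the bound `A/(μ²t + 12L²)` propagates through this recursion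
by induction; the step needs `12·9m²c² ≤ A`, which the last term of `A` provides because
strong convexity and smoothness force `μ ≤ L`.
-/

theorem LipschitzWith.finset_sum {α ι β : Type*} [PseudoEMetricSpace α]
    [SeminormedAddCommGroup β] (s : Finset ι) {K : ι → ℝ≥0} {f : ι → α → β}
    (hf : ∀ i ∈ s, LipschitzWith (K i) (f i)) :
    LipschitzWith (∑ i ∈ s, K i) fun x => ∑ i ∈ s, f i x := by
  classical
  induction s using Finset.induction_on with
  | empty => simpa using LipschitzWith.const (0 : β)
  | insert i s hi ih =>
    simp only [Finset.sum_insert hi]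
    exact (hf i (mem_insert_self i s)).add (ih fun j hj => hf j (mem_insert_of_mem hj))

theorem Fintype.expect_comp_eval {ι V M : Type*} [Fintype ι] [DecidableEq ι] [Fintype V]
    [Nonempty V] [AddCommMonoid M] [Module ℚ≥0 M] (i : ι) (φ : V → M) :
    𝔼 j : ι → V, φ (j i) = 𝔼 v, φ v := by
  rw [Fintype.expect_equiv (Equiv.funSplitAt i V) (fun j => φ (j i)) (fun q => φ q.1)
      fun _ => rfl,
    ← Finset.univ_product_univ, Finset.expect_product]
  simp only [Fintype.expect_const]

section Prox

variable {E : Type*} [NormedAddCommGroup E] [InnerProductSpace ℝ E] {G : E → ℝ} {β : ℝ}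
  {z p : E}

theorem inner_sub_le_of_isMinOn_prox (hG : ConvexOn ℝ univ G) (hβ : 0 < β)
    (hp : IsMinOn (fun u => G u + (1 / (2 * β)) * ‖z - u‖ ^ 2) univ p) (y : E) :
    ⟪z - p, y - p⟫ ≤ β * (G y - G p) := by
  set I := ⟪z - p, y - p⟫
  set N := ‖y - p‖ ^ 2
  have hslope : ∀ s ∈ Ioc (0 : ℝ) 1, 2 * (I - β * (G y - G p)) ≤ s * N := by
    rintro s ⟨hs0, hs1⟩
    have hmin : G p + (1 / (2 * β)) * ‖z - p‖ ^ 2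
        ≤ G (p + s • (y - p)) + (1 / (2 * β)) * ‖z - (p + s • (y - p))‖ ^ 2 :=
      hp (mem_univ _)
    have hconv : G (p + s • (y - p)) ≤ (1 - s) * G p + s * G y := by
      have h := hG.2 (mem_univ p) (mem_univ y) (sub_nonneg.2 hs1) hs0.le (sub_add_cancel 1 s)
      rwa [show (1 - s) • p + s • y = p + s • (y - p) by module] at h
    have hnorm : ‖z - (p + s • (y - p))‖ ^ 2 = ‖z - p‖ ^ 2 - 2 * s * I + s ^ 2 * N := by
      rw [← sub_sub, norm_sub_sq_real, inner_smul_right, norm_smul, mul_pow, Real.norm_eq_abs,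
        sq_abs]
      ring
    rw [hnorm] at hmin
    have hgain : 1 / (2 * β) * (s * (2 * I - s * N)) ≤ s * (G y - G p) := by
      linarith
    rw [one_div, inv_mul_le_iff₀ (by positivity), mul_left_comm] at hgain
    linarith [le_of_mul_le_mul_left hgain hs0]
  have hlim : Tendsto (fun s : ℝ => s * N) (𝓝[>] 0) (𝓝 0) := by
    have h := (continuous_mul_const N).tendsto 0
    rw [zero_mul] at h
    exact h.mono_left nhdsWithin_le_nhds
  linarith [ge_of_tendsto hlim (eventually_of_mem (Ioc_mem_nhdsGT one_pos) hslope)]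

theorem norm_sub_sq_add_norm_sub_sq_le_of_isMinOn_prox (hG : ConvexOn ℝ univ G) (hβ : 0 < β)
    (hp : IsMinOn (fun u => G u + (1 / (2 * β)) * ‖z - u‖ ^ 2) univ p) (y : E) :
    ‖p - y‖ ^ 2 + ‖z - p‖ ^ 2 ≤ ‖z - y‖ ^ 2 + 2 * β * (G y - G p) := by
  have hsplit : ‖z - y‖ ^ 2 = ‖z - p‖ ^ 2 - 2 * ⟪z - p, y - p⟫ + ‖y - p‖ ^ 2 := by
    rw [← norm_sub_sq_real, sub_sub_sub_cancel_right]
  rw [hsplit, norm_sub_rev p y]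
  linarith [inner_sub_le_of_isMinOn_prox hG hβ hp y]

theorem norm_sub_le_of_isMinOn_prox {K : ℝ≥0} (hG : ConvexOn ℝ univ G)
    (hGlip : LipschitzWith K G) (hβ : 0 < β)
    (hp : IsMinOn (fun u => G u + (1 / (2 * β)) * ‖z - u‖ ^ 2) univ p) :
    ‖z - p‖ ≤ β * K := by
  have h := norm_sub_sq_add_norm_sub_sq_le_of_isMinOn_prox hG hβ hp z
  have hlip := hGlip.le_add_mul z p
  rw [sub_self, norm_zero, norm_sub_rev] at h
  rw [dist_eq_norm] at hlip
  have : ‖z - p‖ * ‖z - p‖ ≤ ‖z - p‖ * (β * K) := by nlinarith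
  rcases (norm_nonneg (z - p)).eq_or_lt with h0 | h0
  · rw [← h0]; positivity
  · exact le_of_mul_le_mul_left this h0

end Prox

section Gradient

variable {E : Type*} [NormedAddCommGroup E] [InnerProductSpace ℝ E] {f : E → ℝ} {f' : E → E}
  {μ L : ℝ}

theorem mul_norm_sub_sq_le_inner_sub_of_strongConvex
    (hsc : ∀ x y, f x + ⟪f' x, y - x⟫ + (μ / 2) * ‖y - x‖ ^ 2 ≤ f y) (x y : E) :
    μ * ‖x - y‖ ^ 2 ≤ ⟪f' x - f' y, x - y⟫ := by
  have hxy := hsc x y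
  have hyx := hsc y x
  rw [norm_sub_rev y x, ← neg_sub x y, inner_neg_right] at hxy
  rw [inner_sub_left]
  linarith

theorem le_of_strongConvex_of_lipschitz_gradient [Nontrivial E]
    (hsc : ∀ x y, f x + ⟪f' x, y - x⟫ + (μ / 2) * ‖y - x‖ ^ 2 ≤ f y)
    (hlip : ∀ x y, ‖f' x - f' y‖ ≤ L * ‖x - y‖) : μ ≤ L := by
  obtain ⟨v, hv⟩ := exists_ne (0 : E)
  have hpos : 0 < ‖v - 0‖ := norm_pos_iff.2 (sub_ne_zero.2 hv)
  have h : μ * ‖v - 0‖ ^ 2 ≤ L * ‖v - 0‖ ^ 2 :=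
    calc μ * ‖v - 0‖ ^ 2 ≤ ⟪f' v - f' 0, v - 0⟫ :=
          mul_norm_sub_sq_le_inner_sub_of_strongConvex hsc v 0
      _ ≤ ‖f' v - f' 0‖ * ‖v - 0‖ := real_inner_le_norm _ _
      _ ≤ L * ‖v - 0‖ * ‖v - 0‖ := mul_le_mul_of_nonneg_right (hlip v 0) hpos.le
      _ = L * ‖v - 0‖ ^ 2 := by ring
  exact le_of_mul_le_mul_right h (by positivity)

theorem norm_le_of_hasGradientAt_of_isMin_add [CompleteSpace E] {g : E → ℝ} {x d : E}
    {K : ℝ≥0} (hf : HasGradientAt f d x) (hg : LipschitzWith K g)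
    (hmin : ∀ y, f x + g x ≤ f y + g y) :
    ‖d‖ ≤ K := by
  have hline : HasDerivAt (fun t : ℝ => f (x - t • d)) (-‖d‖ ^ 2) 0 := by
    have hx : x - (0 : ℝ) • d = x := by rw [zero_smul, sub_zero]
    have h := (hx ▸ hf).hasFDerivAt.comp_hasDerivAt (0 : ℝ)
      (((hasDerivAt_id (0 : ℝ)).smul_const d).const_sub x)
    simpa [Function.comp_def, real_inner_self_eq_norm_sq] using h
  have hslope : ∀ t ∈ Ioi (0 : ℝ),
      -(K * ‖d‖) ≤ t⁻¹ • (f (x - (0 + t) • d) - f (x - (0 : ℝ) • d)) := by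
    intro t ht
    have h1 := hmin (x - t • d)
    have h2 := hg.le_add_mul (x - t • d) x
    rw [dist_eq_norm, sub_sub_cancel_left, norm_neg, norm_smul, Real.norm_of_nonneg ht.le] at h2
    rw [zero_add, zero_smul, sub_zero, smul_eq_mul, le_inv_mul_iff₀ ht]
    linarith
  have h := ge_of_tendsto hline.tendsto_slope_zero_right (eventually_mem_nhdsWithin.mono hslope)
  nlinarith [norm_nonneg d, K.coe_nonneg]

end Gradient

section ProxGradientStep

variable {E : Type*} [NormedAddCommGroup E] [InnerProductSpace ℝ E] {K : ℝ≥0}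

theorem norm_sub_sq_le_of_isMinOn_prox_of_lipschitz {G : E → ℝ} {β : ℝ} {z p : E}
    (hG : ConvexOn ℝ univ G) (hGlip : LipschitzWith K G) (hβ : 0 < β)
    (hp : IsMinOn (fun u => G u + (1 / (2 * β)) * ‖z - u‖ ^ 2) univ p) (x y : E) :
    ‖p - y‖ ^ 2
      ≤ ‖z - y‖ ^ 2 + 2 * β * (G y - G x) + 2 * β * K * (‖x - z‖ + β * K) := by
  have hthree := norm_sub_sq_add_norm_sub_sq_le_of_isMinOn_prox hG hβ hp y
  have hGxp : G x - G p ≤ K * (‖x - z‖ + β * K) := by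
    have h := hGlip.le_add_mul x p
    rw [dist_eq_norm] at h
    have htri : ‖x - p‖ ≤ ‖x - z‖ + β * K :=
      (norm_sub_le_norm_sub_add_norm_sub x z p).trans
        (add_le_add_right (norm_sub_le_of_isMinOn_prox hG hGlip hβ hp) _)
    nlinarith [K.coe_nonneg]
  nlinarith [mul_le_mul_of_nonneg_left hGxp (by positivity : (0 : ℝ) ≤ 2 * β),
    sq_nonneg ‖z - p‖]

variable {m : ℕ} {F : E → ℝ} {gradF : E → E} {G : Fin m → E → ℝ}
  {prox : Fin m → ℝ → E → E} {μ L α : ℝ} {xstar : E}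

theorem expect_norm_prox_gradient_step_sub_sq_le (hm : 0 < m)
    (hsc : ∀ x y, F x + ⟪gradF x, y - x⟫ + (μ / 2) * ‖y - x‖ ^ 2 ≤ F y)
    (hlip : ∀ x y, ‖gradF x - gradF y‖ ≤ L * ‖x - y‖)
    (hGconv : ∀ j, ConvexOn ℝ univ (G j)) (hGlip : ∀ j, LipschitzWith K (G j))
    (hprox : ∀ j β z, 0 < β →
      IsMinOn (fun u => G j u + (1 / (2 * β)) * ‖z - u‖ ^ 2) univ (prox j β z))
    (hxstar : ∀ y, F xstar + ∑ j, G j xstar ≤ F y + ∑ j, G j y)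
    (hgrad : ‖gradF xstar‖ ≤ m * K) (hα : 0 < α) (x : E) :
    𝔼 j, ‖prox j (m * α) (x - α • gradF x) - xstar‖ ^ 2
      ≤ (1 - μ * α + 2 * L ^ 2 * α ^ 2) * ‖x - xstar‖ ^ 2 + 9 * (m * K * α) ^ 2 := by
  have : Nonempty (Fin m) := ⟨⟨0, hm⟩⟩
  set z := x - α • gradF x
  set r := ‖x - xstar‖
  set g := ‖gradF x‖
  have hxz : ‖x - z‖ = α * g := by
    rw [sub_sub_cancel, norm_smul, Real.norm_of_nonneg hα.le]
  have hper : ∀ j, ‖prox j (m * α) z - xstar‖ ^ 2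
      ≤ ‖z - xstar‖ ^ 2 + 2 * K * (m * α) * (α * g + m * α * K)
        + 2 * (m * α) * (G j xstar - G j x) := fun j => by
    have hβ : (0 : ℝ) < m * α := by positivity
    have h := norm_sub_sq_le_of_isMinOn_prox_of_lipschitz (hGconv j) (hGlip j) hβ
      (hprox j _ z hβ) x xstar
    rw [hxz] at h
    linarith
  have hmean : 𝔼 j, (2 * (m * α) * (G j xstar - G j x))
      = 2 * α * (∑ j, G j xstar - ∑ j, G j x) := by
    rw [← Finset.mul_expect, Fintype.expect_eq_sum_div_card, Fintype.card_fin,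
      Finset.sum_sub_distrib]
    field_simp
  have havg : 𝔼 j, ‖prox j (m * α) z - xstar‖ ^ 2
      ≤ ‖z - xstar‖ ^ 2 + 2 * K * (m * α) * (α * g + m * α * K)
        + 2 * α * (∑ j, G j xstar - ∑ j, G j x) := by
    calc _ ≤ 𝔼 j, (‖z - xstar‖ ^ 2 + 2 * K * (m * α) * (α * g + m * α * K)
          + 2 * (m * α) * (G j xstar - G j x)) := Finset.expect_le_expect fun j _ => hper j
      _ = _ := by rw [Finset.expect_add_distrib, Fintype.expect_const, hmean]
  have hz : ‖z - xstar‖ ^ 2 = r ^ 2 - 2 * α * ⟪gradF x, x - xstar⟫ + α ^ 2 * g ^ 2 := by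
    rw [sub_right_comm, norm_sub_sq_real, inner_smul_right, real_inner_comm, norm_smul,
      Real.norm_of_nonneg hα.le]
    ring
  have hdescent : F x - F xstar + μ / 2 * r ^ 2 ≤ ⟪gradF x, x - xstar⟫ := by
    have h := hsc x xstar
    rw [← neg_sub x xstar, inner_neg_right, norm_neg] at h
    linarith
  have hopt := hxstar x
  have hg : g ≤ L * r + m * K :=
    calc g ≤ ‖gradF x - gradF xstar‖ + ‖gradF xstar‖ := norm_le_norm_sub_add _ _
      _ ≤ L * r + m * K := add_le_add (hlip x xstar) hgrad
  have hg2 : (g + m * K) ^ 2 ≤ 2 * L ^ 2 * r ^ 2 + 8 * (m * K) ^ 2 := by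
    calc (g + m * K) ^ 2 ≤ (L * r + 2 * (m * K)) ^ 2 :=
          pow_le_pow_left₀ (by positivity) (by linarith) 2
      _ ≤ 2 * L ^ 2 * r ^ 2 + 8 * (m * K) ^ 2 := by
          nlinarith [sq_nonneg (L * r - 2 * (m * K))]
  nlinarith [mul_le_mul_of_nonneg_left hdescent hα.le,
    mul_le_mul_of_nonneg_left hg2 (sq_nonneg α)]

end ProxGradientStep

section BlockSelection

variable {ι κ V : Type*} [Fintype ι] [DecidableEq ι] [Fintype κ] [Fintype V] [Nonempty V]

def blockSelect (y : V → EuclideanSpace ℝ (ι × κ)) (j : ι → V) :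
    EuclideanSpace ℝ (ι × κ) :=
  WithLp.toLp 2 fun q => y (j q.1) q

theorem expect_norm_blockSelect_sub_sq (y : V → EuclideanSpace ℝ (ι × κ))
    (w : EuclideanSpace ℝ (ι × κ)) :
    𝔼 j : ι → V, ‖blockSelect y j - w‖ ^ 2 = 𝔼 v, ‖y v - w‖ ^ 2 := by
  simp only [EuclideanSpace.norm_sq_eq, Finset.expect_sum_comm]
  exact Finset.sum_congr rfl fun q _ => Fintype.expect_comp_eval q.1 fun v => ‖(y v - w) q‖ ^ 2

end BlockSelection

section UniformProcess

variable {ι E : Type*}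

-- Averaging over `σ : Fin k → ι` is the expectation over the i.i.d. uniform indices that drive
-- the first `k` steps; the padding is never read (`process_congr_of_forall_lt`).
def padSeq (a : ι) {k : ℕ} (σ : Fin k → ι) : ℕ → ι :=
  fun t => if h : t < k then σ ⟨t, h⟩ else a

variable {X : ℕ → (ℕ → ι) → E} {Φ : ℕ → E → ι → E} {x0 : E}

theorem process_congr_of_forall_lt (hX0 : ∀ ω, X 0 ω = x0)
    (hX : ∀ t ω, X (t + 1) ω = Φ t (X t ω) (ω t)) {t : ℕ} {ω ω' : ℕ → ι}
    (h : ∀ s < t, ω s = ω' s) : X t ω = X t ω' := by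
  induction t with
  | zero => rw [hX0, hX0]
  | succ t ih => rw [hX, hX, ih fun s hs => h s (by omega), h t (by omega)]

theorem expect_process_succ [Fintype ι] (hX0 : ∀ ω, X 0 ω = x0)
    (hX : ∀ t ω, X (t + 1) ω = Φ t (X t ω) (ω t)) (a : ι) (f : E → ℝ) (t : ℕ) :
    𝔼 σ : Fin (t + 1) → ι, f (X (t + 1) (padSeq a σ))
      = 𝔼 σ : Fin t → ι, 𝔼 j, f (Φ t (X t (padSeq a σ)) j) := by
  have hsnoc : ∀ (σ : Fin t → ι) (j : ι),
      X (t + 1) (padSeq a (Fin.snoc σ j : Fin (t + 1) → ι)) = Φ t (X t (padSeq a σ)) j := by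
    intro σ j
    have hpast : ∀ s < t, padSeq a (Fin.snoc σ j : Fin (t + 1) → ι) s = padSeq a σ s := by
      intro s hs
      simp only [padSeq, dif_pos hs, dif_pos (Nat.lt_succ_of_lt hs)]
      exact Fin.snoc_castSucc (α := fun _ => ι) j σ ⟨s, hs⟩
    have hnow : padSeq a (Fin.snoc σ j : Fin (t + 1) → ι) t = j := by
      simp only [padSeq, dif_pos (Nat.lt_succ_self t)]
      exact Fin.snoc_last (α := fun _ => ι) j σ
    rw [hX, hnow, process_congr_of_forall_lt hX0 hX hpast]
  rw [Fintype.expect_equiv (Fin.snocEquiv fun _ => ι).symm _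
      (fun p => f (X (t + 1) (padSeq a (Fin.snoc p.2 p.1 : Fin (t + 1) → ι))))
      fun σ => by
        simp only [Fin.snocEquiv, Equiv.symm_mk, Equiv.coe_fn_mk, Fin.snoc_init_self],
    ← Finset.univ_product_univ, Finset.expect_product, Finset.expect_comm]
  simp only [hsnoc]

theorem expect_process_succ_le [Fintype ι] [Nonempty ι] (hX0 : ∀ ω, X 0 ω = x0)
    (hX : ∀ t ω, X (t + 1) ω = Φ t (X t ω) (ω t)) (a : ι) {f : E → ℝ} {t : ℕ}
    {r b : ℝ} (hstep : ∀ x, 𝔼 j, f (Φ t x j) ≤ r * f x + b) :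
    𝔼 σ : Fin (t + 1) → ι, f (X (t + 1) (padSeq a σ))
      ≤ r * 𝔼 σ : Fin t → ι, f (X t (padSeq a σ)) + b := by
  rw [expect_process_succ hX0 hX, mul_expect, ← Fintype.expect_const (ι := Fin t → ι) b,
    ← expect_add_distrib]
  exact expect_le_expect fun σ _ => hstep _

theorem one_div_pow_mul_sum_eq_expect_padSeq {n m k : ℕ} (a : Fin m)
    (f : (ℕ → Fin n → Fin m) → ℝ) :
    1 / (m : ℝ) ^ (n * k) * ∑ σ : Fin k → Fin n → Fin m,
        f (fun t i => if h : t < k then σ ⟨t, h⟩ i else a)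
      = 𝔼 σ : Fin k → Fin n → Fin m, f (padSeq (fun _ => a) σ) := by
  have hpad : ∀ σ : Fin k → Fin n → Fin m,
      (fun t i => if h : t < k then σ ⟨t, h⟩ i else a) = padSeq (fun _ => a) σ := fun σ => by
    funext t i
    simp only [padSeq, dite_apply]
  simp only [hpad, Fintype.expect_eq_sum_div_card, Fintype.card_fun, Fintype.card_fin,
    Nat.cast_pow, ← pow_mul]
  ring

end UniformProcess

section StepsizeRecursion

variable {μ L A B : ℝ}

theorem le_div_add_sq_of_le_div {D e e' : ℝ} (hμ : 0 < μ) (hμL : μ ≤ L)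
    (hD : 12 * L ^ 2 ≤ D)
    (hB : 0 ≤ B) (hAB : 12 * B ≤ A) (he : e ≤ A / D)
    (he' : e' ≤ (1 - μ * (2 * μ / D) + 2 * L ^ 2 * (2 * μ / D) ^ 2) * e
      + B * (2 * μ / D) ^ 2) :
    e' ≤ A / (D + μ ^ 2) := by
  have hDpos : 0 < D := by nlinarith
  have hA : 0 ≤ A := by linarith
  set u := μ ^ 2 / D with hu
  have hLu : 8 * L ^ 2 / D ≤ 2 / 3 := by rw [div_le_iff₀ hDpos]; linarith
  have hcoef :
      1 - μ * (2 * μ / D) + 2 * L ^ 2 * (2 * μ / D) ^ 2 = 1 - 2 * u + 8 * L ^ 2 / D * u := by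
    rw [hu]; field_simp; ring
  have hcoef0 : 0 ≤ 1 - 2 * u := by
    rw [hu, sub_nonneg, ← mul_div_assoc, div_le_one hDpos]; nlinarith
  have hα2 : (2 * μ / D) ^ 2 = 4 * u / D := by rw [hu]; field_simp; ring
  rw [hcoef, hα2] at he'
  have h1 : e' ≤ (1 - 2 * u + 8 * L ^ 2 / D * u) * (A / D) + B * (4 * u / D) :=
    he'.trans (by gcongr)
  have h2 : e' ≤ A / D * (1 - u) := by
    calc e' ≤ _ := h1
      _ ≤ (1 - 2 * u + 2 / 3 * u) * (A / D) + A / 12 * (4 * u / D) := by gcongr; linarith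
      _ = A / D * (1 - u) := by ring
  calc e' ≤ A / D * (1 - u) := h2
    _ ≤ A / (D + μ ^ 2) := by
      rw [hu, div_mul_eq_mul_div, div_le_div_iff₀ hDpos (by positivity)]
      field_simp
      nlinarith [mul_nonneg hA (pow_nonneg hμ.le 4)]

theorem le_div_of_stepsize_recursion {α e : ℕ → ℝ} (hμ : 0 < μ) (hμL : μ ≤ L)
    (hB : 0 ≤ B)
    (hAB : 12 * B ≤ A) (halpha : ∀ t : ℕ, α t = 2 * μ / (μ ^ 2 * t + 12 * L ^ 2))
    (he0 : 12 * L ^ 2 * e 0 ≤ A)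
    (he : ∀ t, e (t + 1) ≤ (1 - μ * α t + 2 * L ^ 2 * α t ^ 2) * e t + B * α t ^ 2)
    (k : ℕ) :
    e k ≤ A / (μ ^ 2 * k + 12 * L ^ 2) := by
  induction k with
  | zero =>
    rw [Nat.cast_zero, mul_zero, zero_add, le_div_iff₀ (by nlinarith)]
    linarith
  | succ t ih =>
    have hD : 12 * L ^ 2 ≤ μ ^ 2 * t + 12 * L ^ 2 := by
      have : 0 ≤ μ ^ 2 * t := by positivity
      linarith
    have h := le_div_add_sq_of_le_div hμ hμL hD hB hAB ih (halpha t ▸ he t)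
    rwa [Nat.cast_succ, mul_add_one, add_right_comm]

end StepsizeRecursion

/-- **Sublinear convergence of BlockProx under smoothness and strong convexity.**
`F` differentiable, `L`-smooth and `μ`-strongly convex; each `G_j` convex and
`c`-Lipschitz; `H = F + ∑_j G_j` has the (unique) minimizer `x*`;  stepsizes
`α^{(k)} = 2μ/(μ²k + 12L²)`, `β^{(k)} = m α^{(k)}`.  Then for every `k`,
`E‖x^{(k)} − x*‖² ≤ A/(μ²k + 12L²)` with
`A = max{12L²‖x⁰ − x*‖², (μ²+12L²) E‖x¹ − x*‖², 4(1 + 12L²/μ²)·7m²c²}`,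
where expectations are uniform averages over the i.i.d. uniform index configurations. -/
theorem blockprox_convergence_strongly_convex
    (n m d : ℕ) (hn : 0 < n) (hm : 0 < m) (hd : 0 < d)
    (c L μ : ℝ) (hc : 0 ≤ c) (hL : 0 < L) (hμ : 0 < μ)
    (F : EuclideanSpace ℝ (Fin n × Fin d) → ℝ)
    (gradF : EuclideanSpace ℝ (Fin n × Fin d) → EuclideanSpace ℝ (Fin n × Fin d))
    (hdiff : ∀ x, HasGradientAt F (gradF x) x)
    (hlip : ∀ x y, ‖gradF x - gradF y‖ ≤ L * ‖x - y‖)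
    (hsc : ∀ x y, F x + ⟪gradF x, y - x⟫ + (μ / 2) * ‖y - x‖ ^ 2 ≤ F y)
    (Gj : Fin m → EuclideanSpace ℝ (Fin n × Fin d) → ℝ)
    (hGconv : ∀ j, ConvexOn ℝ Set.univ (Gj j))
    (hGlip : ∀ j, LipschitzWith c.toNNReal (Gj j))
    (H : EuclideanSpace ℝ (Fin n × Fin d) → ℝ)
    (hHdef : ∀ x, H x = F x + ∑ j, Gj j x)
    (xstar : EuclideanSpace ℝ (Fin n × Fin d))
    (hxstar : ∀ y, H xstar ≤ H y)
    (alpha : ℕ → ℝ)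
    (halpha : ∀ k : ℕ, alpha k = 2 * μ / (μ ^ 2 * (k : ℝ) + 12 * L ^ 2))
    (prox : Fin m → ℝ → EuclideanSpace ℝ (Fin n × Fin d) → EuclideanSpace ℝ (Fin n × Fin d))
    (hprox : ∀ (j : Fin m) (β : ℝ) (z : EuclideanSpace ℝ (Fin n × Fin d)), 0 < β →
      IsMinOn (fun u => Gj j u + (1 / (2 * β)) * ‖z - u‖ ^ 2) Set.univ (prox j β z))
    (x0 : EuclideanSpace ℝ (Fin n × Fin d))
    (X : ℕ → (ℕ → Fin n → Fin m) → EuclideanSpace ℝ (Fin n × Fin d))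
    (hX0 : ∀ ω, X 0 ω = x0)
    (hXrec : ∀ t ω (i : Fin n) (a : Fin d),
      X (t + 1) ω (i, a)
        = prox (ω t i) ((m : ℝ) * alpha t)
            (X t ω - alpha t • gradF (X t ω)) (i, a))
    (k : ℕ) :
    (1 / (m : ℝ) ^ (n * k)) *
        ∑ σ : Fin k → Fin n → Fin m,
          ‖X k (fun t i => if h : t < k then σ ⟨t, h⟩ i else ⟨0, hm⟩) - xstar‖ ^ 2
      ≤ (max (max
            (12 * L ^ 2 * ‖x0 - xstar‖ ^ 2)
            ((μ ^ 2 + 12 * L ^ 2) *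
              ((1 / (m : ℝ) ^ (n * 1)) *
                ∑ σ : Fin 1 → Fin n → Fin m,
                  ‖X 1 (fun t i => if h : t < 1 then σ ⟨t, h⟩ i else ⟨0, hm⟩) - xstar‖ ^ 2)))
            (4 * (1 + 12 * L ^ 2 / μ ^ 2) * (7 * (m : ℝ) ^ 2 * c ^ 2)))
        / (μ ^ 2 * (k : ℝ) + 12 * L ^ 2) := by
  have : Nonempty (Fin n × Fin d) := ⟨(⟨0, hn⟩, ⟨0, hd⟩)⟩
  have : NeZero m := ⟨hm.ne'⟩
  have hμL : μ ≤ L := le_of_strongConvex_of_lipschitz_gradient hsc hlip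
  have hopt : ∀ y, F xstar + ∑ j, Gj j xstar ≤ F y + ∑ j, Gj j y := fun y => by
    simpa only [hHdef] using hxstar y
  have hgrad : ‖gradF xstar‖ ≤ m * c.toNNReal := by
    simpa using norm_le_of_hasGradientAt_of_isMin_add (hdiff xstar)
      (LipschitzWith.finset_sum univ fun j _ => hGlip j) hopt
  set Φ := fun t x => blockSelect fun v => prox v (m * alpha t) (x - alpha t • gradF x)
  have hXstep : ∀ t ω, X (t + 1) ω = Φ t (X t ω) (ω t) := fun t ω => by
    ext ⟨i, a⟩; exact hXrec t ω i a
  have hstep : ∀ t x, 𝔼 j, ‖Φ t x j - xstar‖ ^ 2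
      ≤ (1 - μ * alpha t + 2 * L ^ 2 * alpha t ^ 2) * ‖x - xstar‖ ^ 2
        + 9 * (m * c) ^ 2 * alpha t ^ 2 := fun t x => by
    have hα : 0 < alpha t := by rw [halpha]; positivity
    have h := expect_norm_prox_gradient_step_sub_sq_le hm hsc hlip hGconv hGlip hprox hopt hgrad
      hα x
    rw [Real.coe_toNNReal c hc] at h
    simp only [Φ, expect_norm_blockSelect_sub_sq]
    linarith
  rw [one_div_pow_mul_sum_eq_expect_padSeq ⟨0, hm⟩ fun ω => ‖X k ω - xstar‖ ^ 2,
    one_div_pow_mul_sum_eq_expect_padSeq ⟨0, hm⟩ fun ω => ‖X 1 ω - xstar‖ ^ 2]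
  refine le_div_of_stepsize_recursion (B := 9 * (m * c) ^ 2)
    (e := fun t =>
      𝔼 σ : Fin t → Fin n → Fin m, ‖X t (padSeq (fun _ => ⟨0, hm⟩) σ) - xstar‖ ^ 2)
    hμ hμL (by positivity) ?_ halpha (le_max_of_le_left (le_max_of_le_left (by simp [hX0])))
    (fun t => expect_process_succ_le (f := fun x => ‖x - xstar‖ ^ 2) hX0 hXstep _ (hstep t))
    k
  have hratio : 1 ≤ L ^ 2 / μ ^ 2 :=
    (one_le_div (by positivity)).2 (pow_le_pow_left₀ hμ.le hμL 2)
  refine le_max_of_le_right ?_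
  rw [mul_div_assoc]
  nlinarith [sq_nonneg ((m : ℝ) * c)]
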